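/- arXiv:1011.6626 — 2 statements merged into one kernel-verified Lean document; each statement's English description precedes it below -/
import Mathlib

section
/- If S ⊆ ℕ^ℕ is Δ⁰₂ (both S and its complement are countable intersections of open sets in the product topology on ℕ^ℕ with ℕ discrete), then S is guessable. -/
open Filter Set
open scoped Classical

/-- The initial segment `(f 0, ..., f n)` of an infinite sequence. -/
def seg (f : ℕ → ℕ) (n : ℕ) : List ℕ := List.ofFn fun i : Fin (n + 1) => f i

/-- `G` guesses `S`: for every `f` eventually `G (f 0, ..., f n)` is 1 if `f ∈ S`, else 0. -/
def Guesses (G : List ℕ → Fin 2) (S : Set (ℕ → ℕ)) : Prop :=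
  ∀ f : ℕ → ℕ, ∃ m, ∀ n, n > m → G (seg f n) = if f ∈ S then 1 else 0

/-- `S` is guessable if some `G` guesses it. -/
def Guessable (S : Set (ℕ → ℕ)) : Prop := ∃ G, Guesses G S

/-- An infinite sequence extends a finite sequence. -/
def ExtendsSeq (h : ℕ → ℕ) (g : List ℕ) : Prop :=
  ∀ i, (hi : i < g.length) → h i = g.get ⟨i, hi⟩

/-- `S` is overguessable. -/
def Overguessable (S : Set (ℕ → ℕ)) : Prop :=
  ∃ μ : List ℕ → ℕ∞,
    (∀ f ∈ S, ∃ B : ℕ, ∀ᶠ n in atTop, μ (seg f n) ≤ (B : ℕ∞)) ∧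
    (∀ f ∉ S, ∀ B : ℕ, ∀ᶠ n in atTop, (B : ℕ∞) < μ (seg f n))

/-- A finite sequence secures an open set: every extension lies in it. -/
def Secures (g : List ℕ) (U : Set (ℕ → ℕ)) : Prop :=
  ∀ h : ℕ → ℕ, ExtendsSeq h g → h ∈ U

lemma seg_get (f : ℕ → ℕ) (n i : ℕ) (hi : i < (seg f n).length) :
    (seg f n).get ⟨i, hi⟩ = f i := by
  simp only [seg, List.get_eq_getElem, List.getElem_ofFn]

lemma seg_length (f : ℕ → ℕ) (n : ℕ) : (seg f n).length = n + 1 := by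
  simp [seg]

lemma extendsSeq_seg_self (f : ℕ → ℕ) (n : ℕ) : ExtendsSeq f (seg f n) := by
  intro i hi
  rw [seg_get]

lemma extendsSeq_seg_mono {h f : ℕ → ℕ} {m n : ℕ} (hmn : m ≤ n)
    (hx : ExtendsSeq h (seg f n)) : ExtendsSeq h (seg f m) := by
  intro i hi
  have hi' : i < (seg f n).length := by
    rw [seg_length] at hi ⊢; omega
  have := hx i hi'
  rw [seg_get] at this
  rw [seg_get]
  exact this

lemma secures_mono {f : ℕ → ℕ} {m n : ℕ} (hmn : m ≤ n) {U : Set (ℕ → ℕ)}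
    (hs : Secures (seg f m) U) : Secures (seg f n) U :=
  fun h hx => hs h (extendsSeq_seg_mono hmn hx)

lemma not_secures {f : ℕ → ℕ} {n : ℕ} {U : Set (ℕ → ℕ)} (hf : f ∉ U) :
    ¬ Secures (seg f n) U :=
  fun hs => hf (hs f (extendsSeq_seg_self f n))

lemma exists_secures {f : ℕ → ℕ} {U : Set (ℕ → ℕ)} (hU : IsOpen U) (hf : f ∈ U) :
    ∃ N, Secures (seg f N) U := by
  obtain ⟨I, u, hIu, hsub⟩ := isOpen_pi_iff.mp hU f hf
  refine ⟨I.sup id, fun h hx => hsub ?_⟩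
  intro a ha
  have haN : a < (seg f (I.sup id)).length := by
    rw [seg_length]
    exact Nat.lt_succ_of_le (Finset.le_sup (f := id) ha)
  have := hx a haN
  rw [seg_get] at this
  rw [this]
  exact (hIu a ha).2

theorem stmt15 (S : Set (ℕ → ℕ))
    (h1 : ∃ U : ℕ → Set (ℕ → ℕ), (∀ n, IsOpen (U n)) ∧ S = ⋂ n, U n)
    (h2 : ∃ V : ℕ → Set (ℕ → ℕ), (∀ n, IsOpen (V n)) ∧ Sᶜ = ⋂ n, V n) :
    Guessable S := by
  obtain ⟨U, hUopen, hUS⟩ := h1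
  obtain ⟨V, hVopen, hVS⟩ := h2
  set a : List ℕ → ℕ∞ := fun g => ⨅ (n : ℕ) (_ : ¬ Secures g (U n)), (n : ℕ∞) with ha
  set b : List ℕ → ℕ∞ := fun g => ⨅ (n : ℕ) (_ : ¬ Secures g (V n)), (n : ℕ∞) with hb
  refine ⟨fun g => if b g < a g then 1 else 0, fun f => ?_⟩
  by_cases hf : f ∈ S
  · -- f ∈ every U n, f ∉ some V m
    have hfU : ∀ n, f ∈ U n := by
      intro n; have := hUS ▸ hf; exact mem_iInter.mp this n
    have hfV : ∃ m, f ∉ V m := by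
      by_contra hc
      push_neg at hc
      have : f ∈ Sᶜ := hVS ▸ mem_iInter.mpr hc
      exact this hf
    obtain ⟨m, hm⟩ := hfV
    -- for all k ≤ m, choose N_k with seg f N_k secures U k
    choose N hN using fun k => exists_secures (hUopen k) (hfU k)
    obtain ⟨M, hM⟩ : ∃ M, ∀ k ≤ m, N k ≤ M :=
      ⟨(Finset.range (m + 1)).sup N, fun k hk =>
        Finset.le_sup (Finset.mem_range.mpr (by omega))⟩
    refine ⟨M, fun n hn => ?_⟩
    have hbn : b (seg f n) ≤ (m : ℕ∞) :=
      iInf₂_le m (not_secures hm)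
    have han : (m : ℕ∞) < a (seg f n) := by
      have : ((m : ℕ∞) + 1) ≤ a (seg f n) := by
        refine le_iInf₂ fun k hk => ?_
        have hkm : m < k := by
          by_contra hkm
          push_neg at hkm
          have hNk : N k ≤ M := hM k (by omega)
          exact hk (secures_mono (by omega) (hN k))
        have : ((m : ℕ) + 1 : ℕ∞) ≤ (k : ℕ∞) := by
          exact_mod_cast Nat.succ_le_of_lt hkm
        simpa using this
      calc (m : ℕ∞) < (m : ℕ∞) + 1 := by
            exact (ENat.lt_add_one_iff (by simp)).mpr le_rfl
        _ ≤ a (seg f n) := this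
    simp only [if_pos hf]
    rw [if_pos (lt_of_le_of_lt hbn han)]
  · -- symmetric
    have hfV : ∀ n, f ∈ V n := by
      intro n
      have : f ∈ Sᶜ := hf
      exact mem_iInter.mp (hVS ▸ this) n
    have hfU : ∃ m, f ∉ U m := by
      by_contra hc
      push_neg at hc
      exact hf (hUS ▸ mem_iInter.mpr hc)
    obtain ⟨m, hm⟩ := hfU
    choose N hN using fun k => exists_secures (hVopen k) (hfV k)
    obtain ⟨M, hM⟩ : ∃ M, ∀ k ≤ m, N k ≤ M :=
      ⟨(Finset.range (m + 1)).sup N, fun k hk =>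
        Finset.le_sup (Finset.mem_range.mpr (by omega))⟩
    refine ⟨M, fun n hn => ?_⟩
    have han : a (seg f n) ≤ (m : ℕ∞) :=
      iInf₂_le m (not_secures hm)
    have hbn : (m : ℕ∞) < b (seg f n) := by
      have : ((m : ℕ∞) + 1) ≤ b (seg f n) := by
        refine le_iInf₂ fun k hk => ?_
        have hkm : m < k := by
          by_contra hkm
          push_neg at hkm
          have hNk : N k ≤ M := hM k (by omega)
          exact hk (secures_mono (by omega) (hN k))
        have : ((m : ℕ) + 1 : ℕ∞) ≤ (k : ℕ∞) := by
          exact_mod_cast Nat.succ_le_of_lt hkm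
        simpa using this
      calc (m : ℕ∞) < (m : ℕ∞) + 1 := by
            exact (ENat.lt_add_one_iff (by simp)).mpr le_rfl
        _ ≤ b (seg f n) := this
    simp only [if_neg hf]
    rw [if_neg (not_lt.mpr (le_trans han (le_of_lt hbn)))]
end

section
/- If S ⊆ ℕ^ℕ is countable and is a countable intersection of open sets in the product topology (ℕ discrete), then S is guessable. -/
open Filter Set
open scoped Classical

lemma extends_seg_iff (h f : ℕ → ℕ) (n : ℕ) :
    ExtendsSeq h (seg f n) ↔ ∀ i ≤ n, h i = f i := by
  constructor
  · intro H i hi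
    have := H i (by simp [seg, Nat.lt_succ_of_le hi])
    simpa only [seg, List.get_eq_getElem, List.getElem_ofFn] using this
  · intro H i hi
    simp only [seg, List.length_ofFn] at hi
    simp only [seg, List.get_eq_getElem, List.getElem_ofFn]
    exact H i (Nat.lt_succ_iff.mp hi)

lemma open_cyl {U : Set (ℕ → ℕ)} (hU : IsOpen U) {f : ℕ → ℕ} (hf : f ∈ U) :
    ∃ N, ∀ h : ℕ → ℕ, (∀ i ≤ N, h i = f i) → h ∈ U := by
  rcases isOpen_pi_iff.mp hU f hf with ⟨I, u, h1, h2⟩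
  refine ⟨I.sup id, fun h hh => h2 ?_⟩
  intro i hi
  have : h i = f i := hh i (Finset.le_sup (f := id) hi)
  rw [this]
  exact (h1 i hi).2

theorem stmt18 (S : Set (ℕ → ℕ)) (hc : S.Countable)
    (h : ∃ U : ℕ → Set (ℕ → ℕ), (∀ n, IsOpen (U n)) ∧ S = ⋂ n, U n) :
    Guessable S := by
  obtain ⟨U, hUo, hSU⟩ := h
  rcases S.eq_empty_or_nonempty with hS | hS
  · exact ⟨fun _ => 0, fun f => ⟨0, fun n _ => by simp [hS]⟩⟩
  obtain ⟨e, he⟩ := hc.exists_eq_range hS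
  set G : List ℕ → Fin 2 := fun σ =>
    if ∃ k, ExtendsSeq (e k) σ ∧ ∀ j ≤ k, ∀ g : ℕ → ℕ, ExtendsSeq g σ → g ∈ U j then 1 else 0
    with hG
  refine ⟨G, fun f => ?_⟩
  by_cases hf : f ∈ S
  · obtain ⟨k, hk⟩ : ∃ k, e k = f := by rwa [he, Set.mem_range] at hf
    have hfU : ∀ j, f ∈ U j := by
      have := hSU ▸ hf
      exact fun j => Set.mem_iInter.mp this j
    have hN : ∀ j, ∃ N, ∀ g : ℕ → ℕ, (∀ i ≤ N, g i = f i) → g ∈ U j :=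
      fun j => open_cyl (hUo j) (hfU j)
    choose N hNs using hN
    refine ⟨(Finset.range (k + 1)).sup N, fun n hn => ?_⟩
    rw [if_pos hf, hG]
    simp only
    rw [if_pos]
    refine ⟨k, (extends_seg_iff _ _ _).mpr fun i _ => by rw [hk], fun j hj g hg => ?_⟩
    refine hNs j g fun i hi => (extends_seg_iff _ _ _).mp hg i (le_trans hi ?_)
    exact le_trans (Finset.le_sup (Finset.mem_range.mpr (Nat.lt_succ_of_le hj))) (le_of_lt hn)
  · obtain ⟨j0, hj0⟩ : ∃ j0, f ∉ U j0 := by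
      by_contra hcon
      push_neg at hcon
      exact hf (hSU ▸ Set.mem_iInter.mpr hcon)
    have hne : ∀ k, ∃ i, f i ≠ e k i := by
      intro k
      by_contra hcon
      push_neg at hcon
      exact hf (he ▸ ⟨k, (funext fun i => (hcon i).symm)⟩)
    choose nk hnk using hne
    refine ⟨(Finset.range (j0 + 1)).sup nk, fun n hn => ?_⟩
    rw [if_neg hf, hG]
    simp only
    rw [if_neg]
    rintro ⟨k, hk1, hk2⟩
    rcases le_or_gt j0 k with hc' | hc'
    · exact hj0 (hk2 j0 hc' f ((extends_seg_iff _ _ _).mpr fun i _ => rfl))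
    · have hle : nk k ≤ n :=
        le_trans (Finset.le_sup (Finset.mem_range.mpr (hc'.trans (Nat.lt_succ_self j0)))) (le_of_lt hn)
      exact hnk k ((extends_seg_iff _ _ _).mp hk1 (nk k) hle).symm
end
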